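/- arXiv:1111.2928 — 5 statements merged into one kernel-verified Lean document; each statement's English description precedes it below -/
import Mathlib

section
/- Every algebra automorphism Φ of B(H) maps the ideal of finite-rank operators into itself: if x ∈ B(H) has finite rank, then Φ(x) has finite rank. -/
/-!
An operator `y` with `y * a * y ∈ ℂ ∙ y` for every `a` has rank at most one, and rank-one
operators have this property; being purely algebraic, it is preserved by any algebra isomorphism,
so `Φ` maps rank-one operators to finite-rank ones. If `x` has finite rank, the orthogonal
projection `P` onto its range is a finite sum of rank-one operators and `x = P * x`; hence
`Φ x = Φ P * Φ x` has range inside that of the finite-rank operator `Φ P`.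
-/

noncomputable section

variable {H : Type*} [NormedAddCommGroup H] [InnerProductSpace ℂ H] [CompleteSpace H]

/-- A bounded operator has finite rank if its range is finite-dimensional. -/
def FiniteRank (x : H →L[ℂ] H) : Prop :=
  FiniteDimensional ℂ (LinearMap.range (x : H →ₗ[ℂ] H))

open InnerProductSpace ContinuousLinearMap

section General

variable {E : Type*} [NormedAddCommGroup E] [InnerProductSpace ℂ E]

namespace FiniteRank

theorem zero : FiniteRank (0 : E →L[ℂ] E) := by
  rw [FiniteRank, toLinearMap_zero, LinearMap.range_zero]
  infer_instance

theorem add {x y : E →L[ℂ] E} (hx : FiniteRank x) (hy : FiniteRank y) : FiniteRank (x + y) := by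
  unfold FiniteRank at *
  exact Submodule.finiteDimensional_of_le (LinearMap.range_add_le (x : E →ₗ[ℂ] E) y)

theorem sum {ι : Type*} (s : Finset ι) {x : ι → E →L[ℂ] E} (hx : ∀ i ∈ s, FiniteRank (x i)) :
    FiniteRank (∑ i ∈ s, x i) :=
  Finset.sum_induction _ FiniteRank (fun _ _ => add) zero hx

theorem mul_right {x : E →L[ℂ] E} (hx : FiniteRank x) (y : E →L[ℂ] E) :
    FiniteRank (x * y) := by
  unfold FiniteRank at *
  exact Submodule.finiteDimensional_of_le
    (LinearMap.range_comp_le_range (y : E →ₗ[ℂ] E) (x : E →ₗ[ℂ] E))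

end FiniteRank

theorem rankOne_mul_mul_rankOne (u v : E) (a : E →L[ℂ] E) :
    rankOne ℂ u v * a * rankOne ℂ u v = inner ℂ v (a u) • rankOne ℂ u v := by
  simp [mul_def, comp_rankOne]

theorem finiteRank_of_forall_mul_mul_eq_smul {y : E →L[ℂ] E}
    (h : ∀ a : E →L[ℂ] E, ∃ c : ℂ, y * a * y = c • y) : FiniteRank y := by
  by_cases hy : ∀ v, y v = 0
  · rw [show y = 0 from ext hy]
    exact FiniteRank.zero
  push Not at hy
  obtain ⟨v, hv⟩ := hy
  have hrange : LinearMap.range (y : E →ₗ[ℂ] E) ≤ ℂ ∙ y v := by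
    rintro _ ⟨z, rfl⟩
    obtain ⟨c, hc⟩ := h (rankOne ℂ z (y v))
    have hyz : inner ℂ (y v) (y v) • y z = c • y v := by
      simpa [rankOne_apply] using congr($hc v)
    refine Submodule.mem_span_singleton.mpr ⟨(inner ℂ (y v) (y v))⁻¹ * c, ?_⟩
    rw [mul_smul, ← hyz, inv_smul_smul₀ (inner_self_ne_zero.mpr hv)]
    rfl
  exact Submodule.finiteDimensional_of_le hrange

theorem AlgEquiv.finiteRank_map_rankOne {F : Type*} [NormedAddCommGroup F]
    [InnerProductSpace ℂ F] (Φ : (E →L[ℂ] E) ≃ₐ[ℂ] (F →L[ℂ] F)) (u v : E) :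
    FiniteRank (Φ (rankOne ℂ u v)) := by
  refine finiteRank_of_forall_mul_mul_eq_smul fun a => ⟨inner ℂ v (Φ.symm a u), ?_⟩
  rw [← Φ.apply_symm_apply a, ← map_mul, ← map_mul, rankOne_mul_mul_rankOne, map_smul,
    Φ.apply_symm_apply]

end General

theorem automorphism_maps_finiteRank_to_finiteRank
    (Φ : (H →L[ℂ] H) ≃ₐ[ℂ] (H →L[ℂ] H))
    (x : H →L[ℂ] H) (hx : FiniteRank x) : FiniteRank (Φ x) := by
  have : FiniteDimensional ℂ (LinearMap.range (x : H →ₗ[ℂ] H)) := hx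
  let P := (LinearMap.range (x : H →ₗ[ℂ] H)).starProjection
  have hPx : P * x = x := ext fun z => Submodule.starProjection_eq_self_iff.mpr ⟨z, rfl⟩
  have hP : FiniteRank (Φ P) := by
    rw [show P = _ from (stdOrthonormalBasis ℂ _).starProjection_eq_sum_rankOne, map_sum]
    exact FiniteRank.sum _ fun i _ => Φ.finiteRank_map_rankOne _ _
  rw [← hPx, map_mul]
  exact hP.mul_right _
end
end

section
/- Let Δ : B(H) → B(H) be a 2-local derivation (for every pair x, y there is a derivation D_{x,y} of B(H) agreeing with Δ at x and y). If Δ vanishes on all finite-rank operators, then Δ is identically zero. -/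
noncomputable section

variable {H : Type*} [NormedAddCommGroup H] [InnerProductSpace ℂ H] [CompleteSpace H]

/-- A (linear) derivation of `B(H)`: the Leibniz rule holds. -/
def IsDerivation (D : (H →L[ℂ] H) →ₗ[ℂ] (H →L[ℂ] H)) : Prop :=
  ∀ x y : H →L[ℂ] H, D (x * y) = D x * y + x * D y

/-- A 2-local derivation: at every pair of points it agrees with some derivation. -/
def Is2LocalDerivation (Δ : (H →L[ℂ] H) → (H →L[ℂ] H)) : Prop :=
  ∀ x y : H →L[ℂ] H, ∃ D : (H →L[ℂ] H) →ₗ[ℂ] (H →L[ℂ] H),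
    IsDerivation D ∧ Δ x = D x ∧ Δ y = D y

/-- The canonical trace, computed along a Hilbert basis. -/
def traceAlong {ι : Type*} (β : HilbertBasis ι ℂ H) (x : H →L[ℂ] H) : ℂ :=
  ∑' i, (inner ℂ (β i) (x (β i)) : ℂ)

/-!
Let `p = |v⟩⟨v|`. A derivation `D` agreeing with `Δ` at `x` and at the finite-rank operator `p`
kills `p`, so the Leibniz rule gives `p (Δ x) p = D (p x p) = ⟪v, x v⟫ D p = 0`, i.e.
`⟪v, (Δ x) v⟫ = 0`. Over `ℂ`, an operator whose numerical range is `{0}` vanishes (polarization).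
-/

open InnerProductSpace ContinuousLinearMap

section RankOne

variable {𝕜 E : Type*} [RCLike 𝕜] [NormedAddCommGroup E] [InnerProductSpace 𝕜 E]

theorem rankOne_mul_mul_rankOne_self (v : E) (T : E →L[𝕜] E) :
    rankOne 𝕜 v v * T * rankOne 𝕜 v v = inner 𝕜 v (T v) • rankOne 𝕜 v v := by
  rw [mul_assoc, mul_def, mul_def, comp_rankOne, rankOne_comp_rankOne]

theorem inner_apply_self_eq_zero_of_rankOne_mul_mul_rankOne_self_eq_zero {v : E}
    {T : E →L[𝕜] E} (h : rankOne 𝕜 v v * T * rankOne 𝕜 v v = 0) : inner 𝕜 v (T v) = 0 := by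
  rcases eq_or_ne v 0 with rfl | hv
  · simp
  · rw [rankOne_mul_mul_rankOne_self, smul_eq_zero] at h
    exact h.resolve_right (rankOne_ne_zero hv hv)

end RankOne

section Derivation

variable {E : Type*} [NormedAddCommGroup E] [InnerProductSpace ℂ E]

theorem finiteRank_rankOne (x y : E) : FiniteRank (rankOne ℂ x y) := by
  have hle : LinearMap.range (rankOne ℂ x y : E →ₗ[ℂ] E) ≤ Submodule.span ℂ {x} := by
    rintro _ ⟨z, rfl⟩
    exact Submodule.smul_mem _ _ (Submodule.mem_span_singleton_self x)
  exact Submodule.finiteDimensional_of_le hle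

variable {D : (E →L[ℂ] E) →ₗ[ℂ] (E →L[ℂ] E)}

theorem IsDerivation.map_mul_mul_of_map_eq_zero (hD : IsDerivation D) {p : E →L[ℂ] E}
    (hp : D p = 0) (x : E →L[ℂ] E) : D (p * x * p) = p * D x * p := by
  rw [hD, hD, hp]
  simp

theorem IsDerivation.rankOne_mul_mul_rankOne_self_eq_zero (hD : IsDerivation D) {v : E}
    (hv : D (rankOne ℂ v v) = 0) (x : E →L[ℂ] E) :
    rankOne ℂ v v * D x * rankOne ℂ v v = 0 := by
  rw [← hD.map_mul_mul_of_map_eq_zero hv, rankOne_mul_mul_rankOne_self, map_smul, hv, smul_zero]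

end Derivation

theorem twoLocalDerivation_eq_zero_of_vanishes_on_finiteRank
    (Δ : (H →L[ℂ] H) → (H →L[ℂ] H)) (hΔ : Is2LocalDerivation Δ)
    (h : ∀ x : H →L[ℂ] H, FiniteRank x → Δ x = 0) : ∀ x : H →L[ℂ] H, Δ x = 0 := by
  intro x
  have hinner : ∀ v : H, inner ℂ (Δ x v) v = 0 := by
    intro v
    obtain ⟨D, hD, hx, hv⟩ := hΔ x (rankOne ℂ v v)
    have hDv : D (rankOne ℂ v v) = 0 := hv ▸ h _ (finiteRank_rankOne v v)
    have hsandwich := hD.rankOne_mul_mul_rankOne_self_eq_zero hDv x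
    rw [← hx] at hsandwich
    rw [← inner_conj_symm,
      inner_apply_self_eq_zero_of_rankOne_mul_mul_rankOne_self_eq_zero hsandwich, map_zero]
  exact coe_injective ((inner_map_self_eq_zero (Δ x : H →ₗ[ℂ] H)).mp hinner)
end
end

section
/- Let Δ be a 2-local derivation on B(H). Then Δ is additive on the ideal of finite-rank operators: Δ(u + v) = Δ(u) + Δ(v) for all finite-rank operators u, v. -/
noncomputable section

variable {H : Type*} [NormedAddCommGroup H] [InnerProductSpace ℂ H] [CompleteSpace H]

/-! Every derivation is a commutator `D x = a ∘ x - x ∘ a` with `a` linear. For `w = |ξ⟩⟨η|` and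
finite-rank `x`, the Leibniz rule `D (x w) = D x ∘ w + x ∘ D w` together with `tr [a, x w] = 0`
gives `⟪η, D x ξ⟫ = tr (D x ∘ w) = -tr (x ∘ D w)`. Taking for `D` the derivation that agrees with
`Δ` at `x` and at `w` yields `⟪η, Δ x ξ⟫ = -tr (x ∘ Δ w)`, which is linear in `x`. -/

open InnerProductSpace

theorem OrthonormalBasis.sum_inner_smul_coe_of_mem {𝕜 E ι : Type*} [RCLike 𝕜]
    [NormedAddCommGroup E] [InnerProductSpace 𝕜 E] [Fintype ι] {K : Submodule 𝕜 E}
    (b : OrthonormalBasis ι 𝕜 K) {y : E} (hy : y ∈ K) :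
    ∑ i, inner 𝕜 (b i : E) y • (b i : E) = y := by
  simpa using congr(($(b.sum_repr' ⟨y, hy⟩) : E))

namespace IsDerivation

variable {D : (H →L[ℂ] H) →ₗ[ℂ] (H →L[ℂ] H)}

/-- The implementing map is `a h = D (rankOne h e) e` for a unit vector `e`. -/
theorem exists_linearMap_apply_eq_commutator (hD : IsDerivation D) :
    ∃ a : H →ₗ[ℂ] H, ∀ (x : H →L[ℂ] H) (h : H), D x h = a (x h) - x (a h) := by
  rcases subsingleton_or_nontrivial H with hH | hH
  · exact ⟨0, fun _ _ => Subsingleton.elim _ _⟩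
  obtain ⟨e, he⟩ := exists_norm_eq H zero_le_one
  have hee : inner ℂ e e = (1 : ℂ) := by simp [inner_self_eq_norm_sq_to_K, he]
  refine ⟨(ContinuousLinearMap.apply ℂ H e).toLinearMap ∘ₗ D ∘ₗ
    ((rankOne ℂ (E := H) (F := H)).flip e).toLinearMap, fun x h => ?_⟩
  have hLeibniz := congr($(hD x (rankOne ℂ h e)) e)
  simp only [ContinuousLinearMap.mul_def, comp_rankOne, add_apply,
    ContinuousLinearMap.comp_apply, rankOne_apply, hee, one_smul] at hLeibniz
  simp only [LinearMap.coe_comp, Function.comp_apply, ContinuousLinearMap.flip_apply,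
    ContinuousLinearMap.coe_coe, ContinuousLinearMap.apply_apply, hLeibniz]
  abel

/-- The right-hand side is `-tr (x ∘ D (rankOne ξ η))`, computed in a basis of a
finite-dimensional subspace containing the range of `x`. -/
theorem inner_apply_eq_neg_sum (hD : IsDerivation D) {ι : Type*} [Fintype ι] {K : Submodule ℂ H}
    (b : OrthonormalBasis ι ℂ K) {x : H →L[ℂ] H} (hx : ∀ h, x h ∈ K) (ξ η : H) :
    inner ℂ η (D x ξ) = -∑ i, inner ℂ (b i : H) (x (D (rankOne ℂ ξ η) (b i))) := by
  obtain ⟨a, ha⟩ := hD.exists_linearMap_apply_eq_commutator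
  have hsum : ∀ (L : H →ₗ[ℂ] H) {y : H}, y ∈ K →
      ∑ i, inner ℂ η (L (b i)) * inner ℂ (b i : H) y = inner ℂ η (L y) := by
    intro L y hy
    conv_rhs => rw [← b.sum_inner_smul_coe_of_mem hy]
    simp [mul_comm]
  simp only [ha, rankOne_apply, map_sub, map_smul, inner_sub_right, inner_smul_right,
    Finset.sum_sub_distrib]
  have hid := hsum LinearMap.id (hx (a ξ))
  simp only [LinearMap.id_apply] at hid
  rw [hid, hsum a (hx ξ)]
  ring

end IsDerivation

theorem Is2LocalDerivation.inner_apply_eq_neg_sum {Δ : (H →L[ℂ] H) → (H →L[ℂ] H)}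
    (hΔ : Is2LocalDerivation Δ) {ι : Type*} [Fintype ι] {K : Submodule ℂ H}
    (b : OrthonormalBasis ι ℂ K) {x : H →L[ℂ] H} (hx : ∀ h, x h ∈ K) (ξ η : H) :
    inner ℂ η (Δ x ξ) = -∑ i, inner ℂ (b i : H) (x (Δ (rankOne ℂ ξ η) (b i))) := by
  obtain ⟨D, hD, hDx, hDw⟩ := hΔ x (rankOne ℂ ξ η)
  rw [hDx, hDw]
  exact hD.inner_apply_eq_neg_sum b hx ξ η

theorem twoLocalDerivation_additive_on_finiteRank
    (Δ : (H →L[ℂ] H) → (H →L[ℂ] H)) (hΔ : Is2LocalDerivation Δ)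
    (u v : H →L[ℂ] H) (hu : FiniteRank u) (hv : FiniteRank v) :
    Δ (u + v) = Δ u + Δ v := by
  let K := LinearMap.range (u : H →ₗ[ℂ] H) ⊔ LinearMap.range (v : H →ₗ[ℂ] H)
  have : FiniteDimensional ℂ K := by unfold FiniteRank at hu hv; infer_instance
  let b := stdOrthonormalBasis ℂ K
  have huK (h : H) : u h ∈ K := Submodule.mem_sup_left (LinearMap.mem_range_self _ h)
  have hvK (h : H) : v h ∈ K := Submodule.mem_sup_right (LinearMap.mem_range_self _ h)
  ext ξ
  refine ext_inner_left ℂ fun η => ?_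
  rw [add_apply, inner_add_right, hΔ.inner_apply_eq_neg_sum b (fun h => add_mem (huK h) (hvK h)),
    hΔ.inner_apply_eq_neg_sum b huK, hΔ.inner_apply_eq_neg_sum b hvK]
  simp only [add_apply, inner_add_right, Finset.sum_add_distrib, neg_add]
end
end

section
/- Every linear Jordan derivation on a semiprime (associative) algebra is a derivation: if A is semiprime and d : A → A is linear with d(x²) = d(x)x + x d(x) for all x, then d(xy) = d(x)y + x d(y) for all x, y. -/
/-! Write `δ(x, y) = d(xy) - d(x) y - x d(y)`. Linearizing the Jordan identity computes `d(uvu)`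
and `d(uvw + wvu)`, and expanding `d` of `(xy)w(yx) + (yx)w(xy) = x(ywy)x + y(xwx)y` in both ways
gives `δ(x, y) w [x, y] + [x, y] w δ(x, y) = 0`. In a 2-torsion-free semiprime ring this forces
`δ(x, y) w [x, y] = 0`, and biadditivity upgrades it to `δ(x, y) w [u, v] = 0` for all `u, v, w`.
Taking `u = δ(x, y)` shows that `δ(x, y)` is central; the Jordan identity applied to
`δ c + c δ = 0` with `c = [x, y]` then gives `δ³ = 0`, and a central nilpotent element of a
semiprime ring is zero. -/

def IsSemiprimeRing (A : Type*) [Ring A] : Prop :=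
  ∀ a : A, (∀ x : A, a * x * a = 0) → a = 0

namespace IsSemiprimeRing

variable {A : Type*} [Ring A]

theorem mul_mul_eq_zero_symm (hA : IsSemiprimeRing A) {a b : A} (h : ∀ w, a * w * b = 0)
    (w : A) : b * w * a = 0 :=
  hA _ fun z => by
    calc b * w * a * z * (b * w * a) = b * w * (a * z * b) * w * a := by noncomm_ring
      _ = 0 := by rw [h, mul_zero, zero_mul, zero_mul]

/-- `(a w b) y (a w b)` equals both `b w b y a w a` and its negative. -/
theorem mul_mul_eq_zero_of_add_swap (hA : IsSemiprimeRing A) (h2 : ∀ m : A, m + m = 0 → m = 0)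
    {a b : A} (h : ∀ w, a * w * b + b * w * a = 0) (w : A) : a * w * b = 0 := by
  have swap (m : A) : a * m * b = -(b * m * a) := eq_neg_of_add_eq_zero_left (h m)
  refine hA _ fun y => h2 _ ?_
  have h_neg : a * w * b * y * (a * w * b) = -(b * w * b * y * (a * w * a)) :=
    calc a * w * b * y * (a * w * b) = a * (w * b * y * a * w) * b := by noncomm_ring
      _ = -(b * (w * b * y * a * w) * a) := swap _
      _ = -(b * w * b * y * (a * w * a)) := by noncomm_ring
  have h_pos : a * w * b * y * (a * w * b) = b * w * b * y * (a * w * a) :=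
    calc a * w * b * y * (a * w * b) = a * w * b * y * -(b * w * a) :=
          congrArg (a * w * b * y * ·) (swap w)
      _ = -(a * (w * b * y) * b * (w * a)) := by noncomm_ring
      _ = -(-(b * (w * b * y) * a) * (w * a)) := by rw [swap]
      _ = b * w * b * y * (a * w * a) := by noncomm_ring
  calc a * w * b * y * (a * w * b) + a * w * b * y * (a * w * b)
      = -(b * w * b * y * (a * w * a)) + b * w * b * y * (a * w * a) := by rw [← h_neg, ← h_pos]
    _ = 0 := neg_add_cancel _

theorem mul_mul_eq_zero_of_add_cross (hA : IsSemiprimeRing A) {a b a' b' : A}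
    (hdiag : ∀ w, a' * w * b' = 0) (h : ∀ w, a * w * b' + a' * w * b = 0) (w : A) :
    a * w * b' = 0 :=
  hA _ fun z => by
    calc a * w * b' * z * (a * w * b') = a * w * b' * z * -(a' * w * b) :=
          congrArg (a * w * b' * z * ·) (eq_neg_of_add_eq_zero_left (h w))
      _ = -(a * w * (b' * z * a') * w * b) := by noncomm_ring
      _ = 0 := by rw [mul_mul_eq_zero_symm hA hdiag]; simp

theorem commute_of_mul_mul_lie_eq_zero (hA : IsSemiprimeRing A) {b : A}
    (h : ∀ t w, b * w * ⁅b, t⁆ = 0) (t : A) : Commute b t := by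
  refine sub_eq_zero.mp (hA _ fun z => ?_)
  calc (b * t - t * b) * z * (b * t - t * b)
        = b * (t * z) * ⁅b, t⁆ - t * (b * z * ⁅b, t⁆) := by rw [Ring.lie_def]; noncomm_ring
    _ = 0 := by rw [h, h, mul_zero, sub_zero]

theorem eq_zero_of_commute_of_mul_self_eq_zero (hA : IsSemiprimeRing A) {b : A}
    (hb : ∀ t, Commute b t) (h : b * b = 0) : b = 0 :=
  hA _ fun z => by rw [(hb z).eq, mul_assoc, h, mul_zero]

end IsSemiprimeRing

def IsJordanDerivation {A : Type*} [Ring A] (d : A →+ A) : Prop :=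
  ∀ x, d (x * x) = d x * x + x * d x

def derivationDefect {A : Type*} [Ring A] (d : A →+ A) (x y : A) : A :=
  d (x * y) - d x * y - x * d y

section

variable {A : Type*} [Ring A] (d : A →+ A)

theorem derivationDefect_add_left (x u y : A) :
    derivationDefect d (x + u) y = derivationDefect d x y + derivationDefect d u y := by
  simp only [derivationDefect, add_mul, map_add]; abel

theorem derivationDefect_add_right (x y v : A) :
    derivationDefect d x (y + v) = derivationDefect d x y + derivationDefect d x v := by
  simp only [derivationDefect, mul_add, map_add]; abel

end

namespace IsJordanDerivation

variable {A : Type*} [Ring A] {d : A →+ A}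

theorem map_mul_add_mul_swap (hd : IsJordanDerivation d) (u v : A) :
    d (u * v + v * u) = d u * v + u * d v + d v * u + v * d u := by
  have e : u * v + v * u = (u + v) * (u + v) - u * u - v * v := by noncomm_ring
  rw [e, map_sub, map_sub, hd, hd, hd, map_add]
  noncomm_ring

theorem derivationDefect_swap (hd : IsJordanDerivation d) (x y : A) :
    derivationDefect d y x = -derivationDefect d x y := by
  have h := hd.map_mul_add_mul_swap x y
  rw [map_add] at h
  simp only [derivationDefect]
  linear_combination (norm := noncomm_ring) h

/-- Applying `d` to `u (uv + vu) + (uv + vu) u - (u²v + vu²) = 2 uvu` computes `2 d(uvu)`. -/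
theorem map_mul_mul_self (hd : IsJordanDerivation d) (h2 : ∀ m : A, m + m = 0 → m = 0)
    (u v : A) : d (u * v * u) = d u * v * u + u * d v * u + u * v * d u := by
  have e : u * v * u + u * v * u =
      u * (u * v + v * u) + (u * v + v * u) * u - (u * u * v + v * (u * u)) := by
    noncomm_ring
  have h := congrArg d e
  rw [map_sub, hd.map_mul_add_mul_swap u, hd.map_mul_add_mul_swap (u * u),
    hd.map_mul_add_mul_swap, hd, map_add] at h
  rw [← sub_eq_zero]
  refine h2 _ ?_
  linear_combination (norm := noncomm_ring) h

theorem map_mul_mul_add_mul_mul (hd : IsJordanDerivation d) (h2 : ∀ m : A, m + m = 0 → m = 0)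
    (u v w : A) : d (u * v * w + w * v * u) =
      d u * v * w + u * d v * w + u * v * d w + d w * v * u + w * d v * u + w * v * d u := by
  have e : u * v * w + w * v * u = (u + w) * v * (u + w) - u * v * u - w * v * w := by noncomm_ring
  rw [e, map_sub, map_sub, hd.map_mul_mul_self h2, hd.map_mul_mul_self h2,
    hd.map_mul_mul_self h2, map_add]
  noncomm_ring

theorem derivationDefect_mul_mul_lie_add_lie_mul_mul (hd : IsJordanDerivation d)
    (h2 : ∀ m : A, m + m = 0 → m = 0) (x y w : A) :
    derivationDefect d x y * w * ⁅x, y⁆ + ⁅x, y⁆ * w * derivationDefect d x y = 0 := by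
  have e : x * y * w * (y * x) + y * x * w * (x * y) =
      x * (y * w * y) * x + y * (x * w * x) * y := by
    noncomm_ring
  have h := hd.map_mul_mul_add_mul_mul h2 (x * y) w (y * x)
  rw [e, map_add, hd.map_mul_mul_self h2, hd.map_mul_mul_self h2, hd.map_mul_mul_self h2,
    hd.map_mul_mul_self h2] at h
  have hxy : d (x * y) = derivationDefect d x y + d x * y + x * d y := by
    rw [derivationDefect]; abel
  have hyx : d (y * x) = -derivationDefect d x y + d y * x + y * d x := by
    rw [← hd.derivationDefect_swap, derivationDefect]; abel
  rw [hxy, hyx] at h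
  rw [Ring.lie_def]
  linear_combination (norm := noncomm_ring) h

theorem map_lie (hd : IsJordanDerivation d) (x y : A) :
    d ⁅x, y⁆ =
      derivationDefect d x y + derivationDefect d x y + ⁅d x, y⁆ + ⁅x, d y⁆ := by
  have h := hd.derivationDefect_swap x y
  simp only [derivationDefect, Ring.lie_def, map_sub] at h ⊢
  linear_combination (norm := noncomm_ring) -h

theorem derivationDefect_mul_mul_lie_self (hd : IsJordanDerivation d) (hA : IsSemiprimeRing A)
    (h2 : ∀ m : A, m + m = 0 → m = 0) (x y w : A) :
    derivationDefect d x y * w * ⁅x, y⁆ = 0 :=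
  hA.mul_mul_eq_zero_of_add_swap h2 (hd.derivationDefect_mul_mul_lie_add_lie_mul_mul h2 x y) w

theorem derivationDefect_mul_mul_lie_left (hd : IsJordanDerivation d) (hA : IsSemiprimeRing A)
    (h2 : ∀ m : A, m + m = 0 → m = 0) (x u y w : A) :
    derivationDefect d x y * w * ⁅u, y⁆ = 0 := by
  refine hA.mul_mul_eq_zero_of_add_cross (b := ⁅x, y⁆)
    (hd.derivationDefect_mul_mul_lie_self hA h2 u y) (fun w => ?_) w
  have h := hd.derivationDefect_mul_mul_lie_self hA h2 (x + u) y w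
  rw [derivationDefect_add_left] at h
  linear_combination (norm := (simp only [Ring.lie_def]; noncomm_ring))
    h - hd.derivationDefect_mul_mul_lie_self hA h2 x y w -
      hd.derivationDefect_mul_mul_lie_self hA h2 u y w

theorem derivationDefect_mul_mul_lie (hd : IsJordanDerivation d) (hA : IsSemiprimeRing A)
    (h2 : ∀ m : A, m + m = 0 → m = 0) (x y u v w : A) :
    derivationDefect d x y * w * ⁅u, v⁆ = 0 := by
  refine hA.mul_mul_eq_zero_of_add_cross (b := ⁅u, y⁆)
    (hd.derivationDefect_mul_mul_lie_left hA h2 x u v) (fun w => ?_) w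
  have h := hd.derivationDefect_mul_mul_lie_left hA h2 x u (y + v) w
  rw [derivationDefect_add_right] at h
  linear_combination (norm := (simp only [Ring.lie_def]; noncomm_ring))
    h - hd.derivationDefect_mul_mul_lie_left hA h2 x u y w -
      hd.derivationDefect_mul_mul_lie_left hA h2 x u v w

theorem derivationDefect_mul_lie (hd : IsJordanDerivation d) (hA : IsSemiprimeRing A)
    (h2 : ∀ m : A, m + m = 0 → m = 0) (x y u v : A) :
    derivationDefect d x y * ⁅u, v⁆ = 0 := by
  simpa using hd.derivationDefect_mul_mul_lie hA h2 x y u v 1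

theorem commute_derivationDefect (hd : IsJordanDerivation d) (hA : IsSemiprimeRing A)
    (h2 : ∀ m : A, m + m = 0 → m = 0) (x y t : A) : Commute (derivationDefect d x y) t :=
  hA.commute_of_mul_mul_lie_eq_zero
    (fun t w => hd.derivationDefect_mul_mul_lie hA h2 x y _ t w) t

theorem derivationDefect_mul_self_mul_map_lie (hd : IsJordanDerivation d)
    (hA : IsSemiprimeRing A) (h2 : ∀ m : A, m + m = 0 → m = 0) (x y : A) :
    derivationDefect d x y * derivationDefect d x y * d ⁅x, y⁆ = 0 := by
  set b := derivationDefect d x y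
  set c := ⁅x, y⁆
  have hb (t : A) : b * t = t * b := (hd.commute_derivationDefect hA h2 x y t).eq
  have hbc : b * c = 0 := hd.derivationDefect_mul_lie hA h2 x y x y
  have h := hd.map_mul_add_mul_swap b c
  rw [← hb c, hbc, add_zero, map_zero] at h
  refine h2 _ ?_
  linear_combination (norm := noncomm_ring)
    -b * h - d b * hbc - hbc * d b + b * hb (d c) - hb (d b) * c

theorem derivationDefect_eq_zero (hd : IsJordanDerivation d) (hA : IsSemiprimeRing A)
    (h2 : ∀ m : A, m + m = 0 → m = 0) (x y : A) : derivationDefect d x y = 0 := by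
  set b := derivationDefect d x y
  have hb (t : A) : Commute b t := hd.commute_derivationDefect hA h2 x y t
  have hb3 : b * b * b = 0 := by
    refine h2 _ ?_
    have h := hd.derivationDefect_mul_self_mul_map_lie hA h2 x y
    rw [hd.map_lie] at h
    linear_combination (norm := noncomm_ring)
      h - b * hd.derivationDefect_mul_lie hA h2 x y (d x) y -
        b * hd.derivationDefect_mul_lie hA h2 x y x (d y)
  have hb2 : b * b = 0 :=
    hA.eq_zero_of_commute_of_mul_self_eq_zero (fun t => (hb t).mul_left (hb t))
      (by rw [← mul_assoc, hb3, zero_mul])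
  exact hA.eq_zero_of_commute_of_mul_self_eq_zero hb hb2

theorem map_mul (hd : IsJordanDerivation d) (hA : IsSemiprimeRing A)
    (h2 : ∀ m : A, m + m = 0 → m = 0) (x y : A) : d (x * y) = d x * y + x * d y := by
  rw [← sub_eq_zero, ← sub_sub]
  exact hd.derivationDefect_eq_zero hA h2 x y

end IsJordanDerivation

/-- Brešar's theorem: every linear Jordan derivation on a semiprime algebra
over a field of characteristic ≠ 2 is a derivation. -/
theorem jordan_derivation_is_derivation_of_semiprime
    {F : Type*} {A : Type*} [Field F] [Ring A] [Algebra F A]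
    (hchar : (2 : F) ≠ 0)
    (hsemiprime : ∀ a : A, (∀ x : A, a * x * a = 0) → a = 0)
    (d : A →ₗ[F] A)
    (hjordan : ∀ x : A, d (x * x) = d x * x + x * d x) :
    ∀ x y : A, d (x * y) = d x * y + x * d y := by
  have h2 (m : A) (hm : m + m = 0) : m = 0 := by
    have : (2 : F) • m = 0 := by rw [two_smul, hm]
    exact (smul_eq_zero.mp this).resolve_left hchar
  exact IsJordanDerivation.map_mul (d := d.toAddMonoidHom) hjordan hsemiprime h2
end

section
/- Let H be an arbitrary (not necessarily separable) complex Hilbert space. Every 2-local derivation Δ : B(H) → B(H) is a derivation; moreover it is inner, i.e. there exists a ∈ B(H) with Δ(x) = a x − x a for all x ∈ B(H). -/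
noncomputable section

variable {H : Type*} [NormedAddCommGroup H] [InnerProductSpace ℂ H] [CompleteSpace H]

/-!
Fix a unit vector `ξ` and write `w ⊗ ξ` for `rankOne w ξ : v ↦ ⟪ξ, v⟫ • w`. For a derivation
`D`, the map `A w = D (w ⊗ ξ) ξ` satisfies `A (x v) = D x v + x (A v)` by the Leibniz rule
applied to `x * (v ⊗ ξ) = (x v) ⊗ ξ`, and every functional `⟪ζ, A ·⟫` is bounded, so `A` is
bounded by the closed graph theorem and `D = ad A`. Hence a 2-local derivation `Δ` agrees at any
two points with some `ad a`.

Two implementers of `Δ` at a rank-one operator `η ⊗ ζ` differ by an element of its commutant,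
which acts by one scalar on `η` and on the row `⟪ζ, ·⟫`; so the coefficient `⟪ζ, Δ x η⟫` equals
`⟪ζ, [a, x] η⟫` for every implementer `a` of `Δ` at `η ⊗ ζ`. The same construction
`A w = Δ (w ⊗ ξ) ξ` is bounded and implements `Δ` at every `η ⊗ ζ` with `⟪ζ, η⟫ ≠ 0`, and these
coefficients already determine `Δ x`.
-/

open InnerProductSpace
open scoped InnerProductSpace ComplexInnerProductSpace

section RCLike

variable {𝕜 E : Type*} [RCLike 𝕜] [NormedAddCommGroup E] [InnerProductSpace 𝕜 E]

theorem eq_zero_of_inner_eq_zero_of_inner_ne_zero {η u : E} (hη : η ≠ 0)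
    (h : ∀ ζ, ⟪ζ, η⟫_𝕜 ≠ 0 → ⟪ζ, u⟫_𝕜 = 0) : u = 0 := by
  refine ext_inner_left 𝕜 fun ζ => ?_
  rw [inner_zero_right]
  by_cases hζη : ⟪ζ, η⟫_𝕜 = 0
  · have hηη : ⟪η, η⟫_𝕜 ≠ 0 := inner_self_ne_zero.mpr hη
    have h' := h (ζ + η) (by rwa [inner_add_left, hζη, zero_add])
    rwa [inner_add_left, h η hηη, add_zero] at h'
  · exact h ζ hζη

theorem exists_continuousLinearMap_of_inner [CompleteSpace E] (A : E → E)
    (hA : ∀ ζ, ∃ g : E →L[𝕜] 𝕜, ∀ w, g w = ⟪ζ, A w⟫_𝕜) : ∃ T : E →L[𝕜] E, ⇑T = A := by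
  choose g hg using hA
  let L : E →ₗ[𝕜] E :=
    { toFun := A
      map_add' := fun v w => ext_inner_left 𝕜 fun ζ => by
        simp only [inner_add_right, ← hg, map_add]
      map_smul' := fun c w => ext_inner_left 𝕜 fun ζ => by
        simp only [inner_smul_right, ← hg, map_smul, smul_eq_mul, RingHom.id_apply] }
  have hgraph : (L.graph : Set (E × E)) = ⋂ ζ, {p | g ζ p.1 = ⟪ζ, p.2⟫_𝕜} := by
    ext p
    simp only [SetLike.mem_coe, LinearMap.mem_graph_iff, Set.mem_iInter, Set.mem_ofPred_eq, hg]
    exact ⟨fun hp ζ => by rw [hp]; rfl, fun hp => ext_inner_left 𝕜 fun ζ => (hp ζ).symm⟩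
  have hclosed : IsClosed (L.graph : Set (E × E)) := hgraph ▸ isClosed_iInter fun ζ =>
    isClosed_eq ((g ζ).continuous.comp continuous_fst) (continuous_const.inner continuous_snd)
  exact ⟨⟨L, L.continuous_of_isClosed_graph hclosed⟩, rfl⟩

theorem commute_sub_iff_commutator_eq {R : Type*} [Ring R] {a b y : R} :
    Commute (a - b) y ↔ a * y - y * a = b * y - y * b := by
  rw [Commute, SemiconjBy, ← sub_eq_zero, ← sub_eq_zero (a := a * y - y * a)]
  constructor <;> intro h <;> rw [← h] <;> noncomm_ring

theorem exists_smul_of_commute_rankOne {B : E →L[𝕜] E} {η ζ : E} (hη : η ≠ 0) (hζ : ζ ≠ 0)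
    (hB : Commute B (rankOne 𝕜 η ζ)) :
    ∃ c : 𝕜, B η = c • η ∧ ∀ v, ⟪ζ, B v⟫_𝕜 = c * ⟪ζ, v⟫_𝕜 := by
  have hBv : ∀ v, ⟪ζ, v⟫_𝕜 • B η = ⟪ζ, B v⟫_𝕜 • η := fun v => by
    simpa using congr($hB v)
  have hζζ : ⟪ζ, ζ⟫_𝕜 ≠ 0 := inner_self_ne_zero.mpr hζ
  have hBη : B η = (⟪ζ, B ζ⟫_𝕜 / ⟪ζ, ζ⟫_𝕜) • η := by
    rw [div_eq_inv_mul, mul_smul, ← hBv ζ, smul_smul, inv_mul_cancel₀ hζζ, one_smul]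
  refine ⟨_, hBη, fun v => smul_left_injective 𝕜 hη ?_⟩
  simp only [← hBv v, hBη, smul_smul, mul_comm]

theorem commute_rankOne_of_apply_eq_smul {B : E →L[𝕜] E} {η ζ : E} {c : 𝕜} (hη : B η = c • η)
    (hζ : ∀ v, ⟪ζ, B v⟫_𝕜 = c * ⟪ζ, v⟫_𝕜) : Commute B (rankOne 𝕜 η ζ) := by
  ext v
  simp [hη, hζ, smul_smul, mul_comm]

theorem inner_commutator_apply_eq_zero_of_commute {B : E →L[𝕜] E} {η ζ : E}
    (hB : Commute B (rankOne 𝕜 η ζ)) (x : E →L[𝕜] E) : ⟪ζ, (B * x - x * B) η⟫_𝕜 = 0 := by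
  rcases eq_or_ne η 0 with rfl | hη
  · simp
  rcases eq_or_ne ζ 0 with rfl | hζ
  · simp
  obtain ⟨c, hBη, hBζ⟩ := exists_smul_of_commute_rankOne hη hζ hB
  simp [inner_sub_right, hBη, hBζ, inner_smul_right]

def Is2LocalInnerDerivation (Δ : (E →L[𝕜] E) → (E →L[𝕜] E)) : Prop :=
  ∀ x y : E →L[𝕜] E, ∃ a : E →L[𝕜] E, Δ x = a * x - x * a ∧ Δ y = a * y - y * a

/-- For `Δ = ad a` and a unit vector `ξ` this is `a - ⟪ξ, a ξ⟫ • 1`, the implementer of `Δ`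
normalised by `⟪ξ, A ξ⟫ = 0`. -/
def implementingMap (Δ : (E →L[𝕜] E) → (E →L[𝕜] E)) (ξ w : E) : E :=
  Δ (rankOne 𝕜 w ξ) ξ

variable {Δ : (E →L[𝕜] E) → (E →L[𝕜] E)} {ξ : E}

theorem implementingMap_eq_of_eq_commutator (hξ : ‖ξ‖ = 1) {a : E →L[𝕜] E} {w : E}
    (ha : Δ (rankOne 𝕜 w ξ) = a * rankOne 𝕜 w ξ - rankOne 𝕜 w ξ * a) :
    implementingMap Δ ξ w = a w - ⟪ξ, a ξ⟫_𝕜 • w := by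
  simp [implementingMap, ha, hξ]

namespace Is2LocalInnerDerivation

theorem inner_apply_eq (hΔ : Is2LocalInnerDerivation Δ) {a : E →L[𝕜] E} {η ζ : E}
    (ha : Δ (rankOne 𝕜 η ζ) = a * rankOne 𝕜 η ζ - rankOne 𝕜 η ζ * a) (x : E →L[𝕜] E) :
    ⟪ζ, Δ x η⟫_𝕜 = ⟪ζ, (a * x - x * a) η⟫_𝕜 := by
  obtain ⟨b, hbx, hb⟩ := hΔ x (rankOne 𝕜 η ζ)
  have hab := inner_commutator_apply_eq_zero_of_commute
    (commute_sub_iff_commutator_eq.mpr (ha.symm.trans hb)) x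
  have hsplit : (a - b) * x - x * (a - b) = (a * x - x * a) - (b * x - x * b) := by noncomm_ring
  rw [hsplit, sub_apply, inner_sub_right, sub_eq_zero] at hab
  rw [hbx, hab]

theorem inner_implementingMap (hΔ : Is2LocalInnerDerivation Δ) (hξ : ‖ξ‖ = 1)
    {b : E →L[𝕜] E} {ζ : E}
    (hb : Δ (rankOne 𝕜 ξ ζ) = b * rankOne 𝕜 ξ ζ - rankOne 𝕜 ξ ζ * b) (w : E) :
    ⟪ζ, implementingMap Δ ξ w⟫_𝕜 = ⟪ζ, b w⟫_𝕜 - ⟪ξ, b ξ⟫_𝕜 * ⟪ζ, w⟫_𝕜 := by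
  simp [implementingMap, hΔ.inner_apply_eq hb, hξ, inner_sub_right, inner_smul_right]

theorem exists_coe_eq_implementingMap [CompleteSpace E] (hΔ : Is2LocalInnerDerivation Δ)
    (hξ : ‖ξ‖ = 1) : ∃ A : E →L[𝕜] E, ⇑A = implementingMap Δ ξ := by
  refine exists_continuousLinearMap_of_inner _ fun ζ => ?_
  obtain ⟨b, hb, -⟩ := hΔ (rankOne 𝕜 ξ ζ) (rankOne 𝕜 ξ ζ)
  exact ⟨(innerSL 𝕜 ζ).comp b - ⟪ξ, b ξ⟫_𝕜 • innerSL 𝕜 ζ,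
    fun w => by simp [hΔ.inner_implementingMap hξ hb]⟩

/- `b` implements `Δ` at `ξ ⊗ ζ` and at `η ⊗ ζ`, which fixes the `ζ`-row of `A - b`; `d`
implements it at `η ⊗ ξ` and at `η ⊗ ζ`, which fixes `(A - b) η`. Both are scalar, and the two
scalars agree because `⟪ζ, η⟫ ≠ 0`. -/
theorem eq_commutator_rankOne (hΔ : Is2LocalInnerDerivation Δ) (hξ : ‖ξ‖ = 1)
    {A : E →L[𝕜] E} (hA : ⇑A = implementingMap Δ ξ) {η ζ : E} (hζη : ⟪ζ, η⟫_𝕜 ≠ 0) :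
    Δ (rankOne 𝕜 η ζ) = A * rankOne 𝕜 η ζ - rankOne 𝕜 η ζ * A := by
  have hη : η ≠ 0 := by rintro rfl; simp at hζη
  have hζ : ζ ≠ 0 := by rintro rfl; simp at hζη
  obtain ⟨b, hbξ, hbη⟩ := hΔ (rankOne 𝕜 ξ ζ) (rankOne 𝕜 η ζ)
  obtain ⟨d, hdξ, hdη⟩ := hΔ (rankOne 𝕜 η ξ) (rankOne 𝕜 η ζ)
  obtain ⟨c, hc, -⟩ := exists_smul_of_commute_rankOne hη hζ
    (commute_sub_iff_commutator_eq.mpr (hdη.symm.trans hbη))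
  have hrow : ∀ w, ⟪ζ, (A - b) w⟫_𝕜 = -⟪ξ, b ξ⟫_𝕜 * ⟪ζ, w⟫_𝕜 := fun w => by
    rw [sub_apply, inner_sub_right, hA, hΔ.inner_implementingMap hξ hbξ]
    ring
  have hcol : (A - b) η = (c - ⟪ξ, d ξ⟫_𝕜) • η := by
    rw [sub_apply, hA, implementingMap_eq_of_eq_commutator hξ hdξ]
    rw [sub_apply] at hc
    linear_combination (norm := module) hc
  have hscalar : c - ⟪ξ, d ξ⟫_𝕜 = -⟪ξ, b ξ⟫_𝕜 := by
    refine mul_right_cancel₀ hζη ?_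
    rw [← hrow η, hcol, inner_smul_right]
  rw [hbη, eq_comm, ← commute_sub_iff_commutator_eq]
  exact commute_rankOne_of_apply_eq_smul hcol (hscalar ▸ hrow)

theorem exists_eq_commutator [CompleteSpace E] (hΔ : Is2LocalInnerDerivation Δ) (hξ : ‖ξ‖ = 1) :
    ∃ a : E →L[𝕜] E, ∀ x, Δ x = a * x - x * a := by
  obtain ⟨A, hA⟩ := hΔ.exists_coe_eq_implementingMap hξ
  refine ⟨A, fun x => ContinuousLinearMap.ext fun η => ?_⟩
  rcases eq_or_ne η 0 with rfl | hη
  · simp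
  rw [← sub_eq_zero]
  refine eq_zero_of_inner_eq_zero_of_inner_ne_zero (𝕜 := 𝕜) hη fun ζ hζη => ?_
  rw [inner_sub_right, hΔ.inner_apply_eq (hΔ.eq_commutator_rankOne hξ hA hζη), sub_self]

end Is2LocalInnerDerivation

end RCLike

section Derivation

variable {E : Type*} [NormedAddCommGroup E] [InnerProductSpace ℂ E]
  {D : (E →L[ℂ] E) →ₗ[ℂ] (E →L[ℂ] E)} {ξ : E}

namespace IsDerivation

theorem implementingMap_mul_apply (hD : IsDerivation D) (hξ : ‖ξ‖ = 1) (x : E →L[ℂ] E) (v : E) :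
    implementingMap D ξ (x v) = D x v + x (implementingMap D ξ v) := by
  have h := hD x (rankOne ℂ v ξ)
  rw [ContinuousLinearMap.mul_def, comp_rankOne] at h
  simp [implementingMap, h, hξ]

theorem inner_implementingMap (hD : IsDerivation D) (hξ : ‖ξ‖ = 1) (ζ v : E) :
    ⟪ζ, implementingMap D ξ v⟫ =
      ⟪ξ, implementingMap D ξ ξ⟫ * ⟪ζ, v⟫ - ⟪ξ, D (rankOne ℂ ξ ζ) v⟫ := by
  have h := congr(⟪ξ, $(hD.implementingMap_mul_apply hξ (rankOne ℂ ξ ζ) v)⟫)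
  unfold implementingMap at h ⊢
  simp [hξ] at h
  linear_combination -h

theorem exists_eq_commutator [CompleteSpace E] (hD : IsDerivation D) (hξ : ‖ξ‖ = 1) :
    ∃ a : E →L[ℂ] E, ∀ x, D x = a * x - x * a := by
  obtain ⟨A, hA⟩ := exists_continuousLinearMap_of_inner (implementingMap D ξ) fun ζ =>
    ⟨⟪ξ, implementingMap D ξ ξ⟫ • innerSL ℂ ζ - (innerSL ℂ ξ).comp (D (rankOne ℂ ξ ζ)),
      fun v => by simp [hD.inner_implementingMap hξ ζ v]⟩
  refine ⟨A, fun x => ContinuousLinearMap.ext fun v => ?_⟩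
  simp [hA, hD.implementingMap_mul_apply hξ]

end IsDerivation

theorem Is2LocalDerivation.is2LocalInnerDerivation [CompleteSpace E]
    {Δ : (E →L[ℂ] E) → (E →L[ℂ] E)} (hΔ : Is2LocalDerivation Δ) (hξ : ‖ξ‖ = 1) :
    Is2LocalInnerDerivation Δ := by
  intro x y
  obtain ⟨D, hD, hx, hy⟩ := hΔ x y
  obtain ⟨a, ha⟩ := hD.exists_eq_commutator hξ
  exact ⟨a, hx.trans (ha x), hy.trans (ha y)⟩

end Derivation

theorem twoLocalDerivation_is_inner_derivation
    (Δ : (H →L[ℂ] H) → (H →L[ℂ] H)) (hΔ : Is2LocalDerivation Δ) :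
    ∃ a : H →L[ℂ] H, ∀ x : H →L[ℂ] H, Δ x = a * x - x * a := by
  rcases subsingleton_or_nontrivial H with hH | hH
  · exact ⟨0, fun x => Subsingleton.elim _ _⟩
  obtain ⟨ξ, hξ⟩ := exists_norm_eq H zero_le_one
  exact (hΔ.is2LocalInnerDerivation hξ).exists_eq_commutator hξ
end
end
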